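/- Let β ∈ [0,1), λ = 1−β, let n satisfy Assumption 1 with δ* > 0, and set γ* = δ*/λ. Let s be real with |s| < 1 such that ξ = (β−s)/(1−s) satisfies |ξ| < 1. Then the clone size generating function itself converges: lim_{t→∞} (𝒴_t(s) − β) = −δ*·Σ_{k=1}^∞ ξ^k/(γ*+k). -/

import Mathlib

open Filter Real intervalIntegral

/-- Assumption 1 on the wild-type growth function `n`. -/
def Assumption1 (n : ℝ → ℝ) : Prop :=
  (∀ τ : ℝ, τ < 0 → n τ = 0) ∧
  ContinuousOn n (Set.Ioi 0) ∧
  Filter.Tendsto n (nhdsWithin 0 (Set.Ioi 0)) (nhds (n 0)) ∧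
  (∀ τ : ℝ, 0 < τ → 0 < n τ) ∧
  MonotoneOn n (Set.Ioi 0) ∧
  (∀ x : ℝ, 0 ≤ x → ∃ L : ℝ, 0 < L ∧
    Filter.Tendsto (fun t : ℝ => n (t - x) / n t) Filter.atTop (nhds L))

/-!
Writing `L x = lim n (t - x) / n t`, the increments `log n t - log n (t - x)` tend to `-log L x`,
so along the progression `t = j x` Cesàro averaging and `log n t / t → δ` force
`L x = exp (-δ x)`. Iterating the resulting bound `n (t - 1) ≤ e^{-δ/2} n t` gives the
domination `n (t - x) ≤ C e^{-η x} n t`, hence by dominated convergence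
`(∫_0^t n (t - x) g x dx) / n t → ∫_0^∞ e^{-δ x} g x dx` for every bounded measurable `g`.
Since `Z_u(s) - β = -λ w / (1 - w)` with `w = ξ e^{-λ u}`, the quantity in the theorem is `-λ`
times the quotient of two such averages, for `g = w / (1 - w)` and `g = 1`. Expanding
`w / (1 - w) = Σ w^{k+1}` turns the first limit into `Σ ξ^{k+1} / (δ + λ (k + 1))`, the second
is `1 / δ`.
-/

open MeasureTheory Set Topology

theorem tendsto_div_natCast_of_tendsto_sub {u : ℕ → ℝ} {l : ℝ}
    (h : Tendsto (fun j => u (j + 1) - u j) atTop (𝓝 l)) :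
    Tendsto (fun j : ℕ => u j / j) atTop (𝓝 l) := by
  have hmean : Tendsto (fun j : ℕ => (u j - u 0) / j) atTop (𝓝 l) := by
    refine h.cesaro.congr fun j => ?_
    rw [Finset.sum_range_sub, inv_mul_eq_div]
  simpa using (hmean.add (tendsto_const_div_atTop_nhds_zero_nat (u 0))).congr fun j => by ring

theorem eq_mul_of_tendsto_sub_comp_sub {f : ℝ → ℝ} {δ m x : ℝ} (hx : 0 < x)
    (hf : Tendsto (fun t => f t / t) atTop (𝓝 δ))
    (hm : Tendsto (fun t => f t - f (t - x)) atTop (𝓝 m)) : m = δ * x := by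
  have hjx : Tendsto (fun j : ℕ => (j : ℝ) * x) atTop atTop :=
    tendsto_natCast_atTop_atTop.atTop_mul_const hx
  have hm' : Tendsto (fun j : ℕ => f (j * x) / j) atTop (𝓝 m) := by
    refine tendsto_div_natCast_of_tendsto_sub
      ((hm.comp (hjx.comp (tendsto_add_atTop_nat 1))).congr fun j => ?_)
    have hj : ((j + 1 : ℕ) : ℝ) * x - x = j * x := by push_cast; ring
    simp only [Function.comp_apply, hj]
  have hδ' : Tendsto (fun j : ℕ => f (j * x) / j) atTop (𝓝 (δ * x)) := by
    refine ((hf.comp hjx).mul_const x).congr fun j => ?_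
    rw [Function.comp_apply, div_mul_eq_mul_div, mul_div_mul_right _ _ hx.ne']
  exact tendsto_nhds_unique hm' hδ'

theorem le_pow_mul_of_le_mul_sub_one {f : ℝ → ℝ} {q T : ℝ} (hq : 0 ≤ q)
    (hstep : ∀ t, T ≤ t → f (t - 1) ≤ q * f t) (m : ℕ) {t : ℝ} (ht : T + m ≤ t) :
    f (t - m) ≤ q ^ m * f t := by
  induction m generalizing t with
  | zero => simp
  | succ m ih =>
    push_cast at ht ⊢
    calc f (t - (m + 1)) = f (t - 1 - m) := by ring_nf
      _ ≤ q ^ m * f (t - 1) := ih (by linarith)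
      _ ≤ q ^ m * (q * f t) := by gcongr; exact hstep t (by linarith [m.cast_nonneg (α := ℝ)])
      _ = q ^ (m + 1) * f t := by ring

theorem Monotone.le_exp_mul_of_le_exp_mul_sub_one {f : ℝ → ℝ} (hf : Monotone f)
    (hf0 : ∀ t, 0 ≤ f t) {η T : ℝ} (hη : 0 ≤ η) (hT : 0 ≤ T)
    (hstep : ∀ t, T ≤ t → f (t - 1) ≤ exp (-η) * f t) {t x : ℝ} (ht : T ≤ t)
    (hx : x ∈ Icc 0 t) : f (t - x) ≤ exp (η * (T + 1)) * exp (-η * x) * f t := by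
  set y := min x (t - T)
  have hy : 0 ≤ y := le_min hx.1 (by linarith)
  have hxy : x - y ≤ T := by
    rcases min_cases x (t - T) with ⟨h, -⟩ | ⟨h, -⟩ <;> linarith [hx.2]
  have hfloor := le_pow_mul_of_le_mul_sub_one (exp_pos (-η)).le hstep ⌊y⌋₊
    (t := t) (by linarith [Nat.floor_le hy, min_le_right x (t - T)])
  rw [← exp_nat_mul] at hfloor
  have hexp : exp (⌊y⌋₊ * -η) ≤ exp (η * (T + 1)) * exp (-η * x) := by
    rw [← exp_add, exp_le_exp]
    nlinarith [Nat.lt_floor_add_one y]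
  calc f (t - x) ≤ f (t - ⌊y⌋₊) := hf (by linarith [Nat.floor_le hy, min_le_left x (t - T)])
    _ ≤ exp (⌊y⌋₊ * -η) * f t := hfloor
    _ ≤ exp (η * (T + 1)) * exp (-η * x) * f t := by gcongr; exact hf0 t

theorem hasSum_pow_succ_of_abs_lt_one {w : ℝ} (hw : |w| < 1) :
    HasSum (fun k : ℕ => w ^ (k + 1)) (w / (1 - w)) := by
  simpa [pow_succ', div_eq_mul_inv] using (hasSum_geometric_of_abs_lt_one hw).mul_left w

theorem integral_exp_neg_mul_Ioi_zero {μ : ℝ} (hμ : 0 < μ) :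
    ∫ x in Ioi 0, exp (-μ * x) = μ⁻¹ := by
  rw [integral_exp_mul_Ioi (neg_neg_of_pos hμ), mul_zero, exp_zero, div_neg, neg_div, neg_neg,
    one_div]

namespace Assumption1

variable {n : ℝ → ℝ}

theorem monotone (hn : Assumption1 n) : Monotone n := by
  obtain ⟨hneg, -, hright, hpos, hmono, -⟩ := hn
  have hzero : 0 ≤ n 0 :=
    ge_of_tendsto hright (eventually_nhdsWithin_of_forall fun τ hτ => (hpos τ hτ).le)
  have hIci : ∀ a b, 0 ≤ a → a ≤ b → n a ≤ n b := by
    intro a b ha hab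
    rcases ha.eq_or_lt with rfl | ha
    · rcases hab.eq_or_lt with rfl | hb
      · rfl
      · refine le_of_tendsto hright ?_
        filter_upwards [Ioc_mem_nhdsGT hb] with τ hτ using hmono hτ.1 hb hτ.2
    · exact hmono ha (ha.trans_le hab) hab
  intro a b hab
  rcases lt_or_ge a 0 with ha | ha
  · rw [hneg a ha]
    rcases lt_or_ge b 0 with hb | hb
    · rw [hneg b hb]
    · exact hzero.trans (hIci 0 b le_rfl hb)
  · exact hIci a b ha hab

theorem nonneg (hn : Assumption1 n) (t : ℝ) : 0 ≤ n t := by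
  have h := hn.monotone (min_le_left t (-1))
  rwa [hn.1 _ (min_lt_of_right_lt (by norm_num))] at h

theorem pos (hn : Assumption1 n) {t : ℝ} (ht : 0 < t) : 0 < n t := hn.2.2.2.1 t ht

theorem tendsto_div_comp_sub {δ : ℝ} (hn : Assumption1 n)
    (hδ : Tendsto (fun t => log (n t) / t) atTop (𝓝 δ)) {x : ℝ} (hx : 0 < x) :
    Tendsto (fun t => n (t - x) / n t) atTop (𝓝 (exp (-δ * x))) := by
  obtain ⟨L, hL0, hlim⟩ := hn.2.2.2.2.2 x hx.le
  have hlog : Tendsto (fun t => log (n t) - log (n (t - x))) atTop (𝓝 (-log L)) := by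
    refine (hlim.log hL0.ne').neg.congr' ?_
    filter_upwards [eventually_gt_atTop x] with t ht
    rw [log_div (hn.pos (by linarith)).ne' (hn.pos (by linarith)).ne', neg_sub]
  rwa [neg_mul, ← eq_mul_of_tendsto_sub_comp_sub hx hδ hlog, neg_neg, exp_log hL0]

theorem exists_le_exp_mul {δ : ℝ} (hn : Assumption1 n)
    (hδ : Tendsto (fun t => log (n t) / t) atTop (𝓝 δ)) (hδpos : 0 < δ) :
    ∃ T C η : ℝ, 0 ≤ C ∧ 0 < η ∧
      ∀ t, T ≤ t → ∀ x ∈ Icc 0 t, n (t - x) ≤ C * exp (-η * x) * n t := by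
  have hq : exp (-δ * 1) < exp (-(δ / 2)) := exp_lt_exp.2 (by linarith)
  obtain ⟨T₀, hT₀⟩ :=
    eventually_atTop.1 ((hn.tendsto_div_comp_sub hδ one_pos).eventually_lt_const hq)
  set T := max T₀ 1
  have hstep : ∀ t, T ≤ t → n (t - 1) ≤ exp (-(δ / 2)) * n t := fun t ht =>
    ((div_lt_iff₀ (hn.pos (by linarith [le_max_right T₀ 1]))).1
      (hT₀ t ((le_max_left _ _).trans ht))).le
  exact ⟨T, _, δ / 2, (exp_pos _).le, by positivity, fun t ht x hx =>
    hn.monotone.le_exp_mul_of_le_exp_mul_sub_one hn.nonneg (by positivity)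
      (le_max_of_le_right zero_le_one) hstep ht hx⟩

theorem tendsto_integral_mul_div {δ C : ℝ} (hn : Assumption1 n)
    (hδ : Tendsto (fun t => log (n t) / t) atTop (𝓝 δ)) (hδpos : 0 < δ) {g : ℝ → ℝ}
    (hg : Measurable g) (hgC : ∀ x, 0 < x → |g x| ≤ C) :
    Tendsto (fun t => (∫ x in 0..t, n (t - x) * g x) / n t) atTop
      (𝓝 (∫ x in Ioi 0, exp (-δ * x) * g x)) := by
  obtain ⟨T, K, η, hK, hη, hdom⟩ := hn.exists_le_exp_mul hδ hδpos
  set F : ℝ → ℝ → ℝ := fun t => (Ioc 0 t).indicator fun x => n (t - x) * g x / n t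
  have hF : ∀ t, 0 ≤ t → ∫ x in Ioi 0, F t x = (∫ x in 0..t, n (t - x) * g x) / n t := by
    intro t ht
    rw [setIntegral_indicator measurableSet_Ioc, inter_eq_right.2 Ioc_subset_Ioi_self,
      MeasureTheory.integral_div, integral_of_le ht]
  refine (MeasureTheory.tendsto_integral_filter_of_dominated_convergence (F := F)
    (fun x => K * C * exp (-η * x))
    ?_ ?_ ?_ ?_).congr' ?_
  · refine Eventually.of_forall fun t => Measurable.aestronglyMeasurable ?_
    exact (((hn.monotone.measurable.comp (measurable_const.sub measurable_id)).mul
      hg).div_const _).indicator measurableSet_Ioc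
  · filter_upwards [eventually_ge_atTop T, eventually_gt_atTop 0] with t hT ht
    refine ae_restrict_of_forall_mem measurableSet_Ioi fun x hx => ?_
    have hC : 0 ≤ C := (abs_nonneg _).trans (hgC x hx)
    by_cases hxt : x ∈ Ioc 0 t
    · dsimp only [F]
      rw [indicator_of_mem hxt, norm_div, norm_mul, Real.norm_of_nonneg (hn.nonneg _),
        Real.norm_of_nonneg (hn.nonneg t), div_le_iff₀ (hn.pos ht), Real.norm_eq_abs]
      calc n (t - x) * |g x| ≤ (K * exp (-η * x) * n t) * C :=
            mul_le_mul (hdom t hT x ⟨hxt.1.le, hxt.2⟩) (hgC x hx) (abs_nonneg _)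
              (by have := hn.nonneg t; positivity)
        _ = K * C * exp (-η * x) * n t := by ring
    · dsimp only [F]
      rw [indicator_of_notMem hxt, norm_zero]
      positivity
  · exact (exp_neg_integrableOn_Ioi 0 hη).const_mul (K * C)
  · refine ae_restrict_of_forall_mem measurableSet_Ioi fun x hx => ?_
    refine ((hn.tendsto_div_comp_sub hδ hx).mul_const (g x)).congr' ?_
    filter_upwards [eventually_ge_atTop x] with t ht
    dsimp only [F]
    rw [indicator_of_mem (show x ∈ Ioc 0 t from ⟨hx, ht⟩), div_mul_eq_mul_div]
  · filter_upwards [eventually_ge_atTop 0] with t ht using hF t ht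

theorem tendsto_integral_div {δ : ℝ} (hn : Assumption1 n)
    (hδ : Tendsto (fun t => log (n t) / t) atTop (𝓝 δ)) (hδpos : 0 < δ) :
    Tendsto (fun t => (∫ τ in 0..t, n τ) / n t) atTop (𝓝 δ⁻¹) := by
  have h := hn.tendsto_integral_mul_div hδ hδpos measurable_const (C := 1) fun _ _ => abs_one.le
  simp only [mul_one, integral_exp_neg_mul_Ioi_zero hδpos] at h
  simpa using h

end Assumption1

-- With `β = 1 - λ`, the generating function is `Z_u(s) = β - λ * cloneKernel λ ξ u`.
noncomputable def cloneKernel (lam ξ u : ℝ) : ℝ :=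
  ξ * exp (-lam * u) / (1 - ξ * exp (-lam * u))

section cloneKernel

variable {lam ξ u : ℝ}

theorem abs_mul_exp_neg_le (hlam : 0 ≤ lam) (hu : 0 ≤ u) : |ξ * exp (-lam * u)| ≤ |ξ| := by
  rw [abs_mul, abs_exp]
  exact mul_le_of_le_one_right (abs_nonneg ξ) (exp_le_one_iff.2 (by nlinarith))

theorem abs_mul_exp_neg_lt_one (hlam : 0 ≤ lam) (hξ : |ξ| < 1) (hu : 0 ≤ u) :
    |ξ * exp (-lam * u)| < 1 :=
  (abs_mul_exp_neg_le hlam hu).trans_lt hξ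

theorem one_sub_mul_exp_neg_ne_zero (hlam : 0 ≤ lam) (hξ : |ξ| < 1) (hu : 0 ≤ u) :
    1 - ξ * exp (-lam * u) ≠ 0 :=
  sub_ne_zero.2 ((le_abs_self _).trans_lt (abs_mul_exp_neg_lt_one hlam hξ hu)).ne'

theorem one_sub_div_eq_sub_cloneKernel (hlam : 0 ≤ lam) (hξ : |ξ| < 1) (hu : 0 ≤ u) :
    1 - lam / (1 - ξ * exp (-lam * u)) = (1 - lam) - lam * cloneKernel lam ξ u := by
  have hw := one_sub_mul_exp_neg_ne_zero hlam hξ hu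
  rw [cloneKernel]
  generalize ξ * exp (-lam * u) = w at hw ⊢
  field_simp
  ring

theorem abs_cloneKernel_le (hlam : 0 ≤ lam) (hξ : |ξ| < 1) (hu : 0 ≤ u) :
    |cloneKernel lam ξ u| ≤ |ξ| / (1 - |ξ|) := by
  have hden : 1 - |ξ| ≤ |1 - ξ * exp (-lam * u)| := by
    linarith [abs_sub_abs_le_abs_sub 1 (ξ * exp (-lam * u)), abs_one (α := ℝ),
      abs_mul_exp_neg_le (ξ := ξ) hlam hu]
  rw [cloneKernel, abs_div]
  exact div_le_div₀ (abs_nonneg ξ) (abs_mul_exp_neg_le hlam hu) (by linarith) hden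

theorem measurable_cloneKernel : Measurable (cloneKernel lam ξ) := by
  unfold cloneKernel
  fun_prop

theorem continuousOn_cloneKernel (hlam : 0 ≤ lam) (hξ : |ξ| < 1) :
    ContinuousOn (cloneKernel lam ξ) (Ici 0) := by
  unfold cloneKernel
  exact ContinuousOn.div (by fun_prop) (by fun_prop)
    fun u hu => one_sub_mul_exp_neg_ne_zero hlam hξ hu

theorem hasSum_cloneKernel (hlam : 0 ≤ lam) (hξ : |ξ| < 1) (hu : 0 ≤ u) :
    HasSum (fun k : ℕ => ξ ^ (k + 1) * exp (-(lam * (k + 1)) * u)) (cloneKernel lam ξ u) := by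
  refine (hasSum_pow_succ_of_abs_lt_one (abs_mul_exp_neg_lt_one hlam hξ hu)).congr_fun
    fun k => ?_
  rw [mul_pow, ← exp_nat_mul]
  push_cast
  ring_nf

theorem integral_exp_neg_mul_cloneKernel {δ : ℝ} (hδ : 0 < δ) (hlam : 0 < lam)
    (hξ : |ξ| < 1) :
    ∫ x in Ioi 0, exp (-δ * x) * cloneKernel lam ξ x =
      ∑' k : ℕ, ξ ^ (k + 1) / (δ + lam * (k + 1)) := by
  set μ : ℕ → ℝ := fun k => δ + lam * (k + 1)
  have hμ : ∀ k, 0 < μ k := fun k => by positivity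
  set F : ℕ → ℝ → ℝ := fun k x => ξ ^ (k + 1) * exp (-μ k * x)
  have hF : ∀ k, ∫ x in Ioi 0, F k x = ξ ^ (k + 1) / μ k := fun k => by
    rw [MeasureTheory.integral_const_mul, integral_exp_neg_mul_Ioi_zero (hμ k), div_eq_mul_inv]
  have hnorm : ∀ k, ∫ x in Ioi 0, ‖F k x‖ = |ξ| ^ (k + 1) / μ k := fun k => by
    simp_rw [F, norm_mul, norm_pow, Real.norm_eq_abs, abs_exp]
    rw [MeasureTheory.integral_const_mul, integral_exp_neg_mul_Ioi_zero (hμ k), div_eq_mul_inv]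
  have hsummable : Summable fun k => ∫ x in Ioi 0, ‖F k x‖ := by
    refine Summable.of_nonneg_of_le (fun k => by rw [hnorm]; positivity) (fun k => ?_)
      ((hasSum_pow_succ_of_abs_lt_one (by rwa [abs_abs])).summable.div_const δ)
    rw [hnorm]
    exact div_le_div_of_nonneg_left (by positivity) hδ (by simp only [μ]; nlinarith)
  have hsum : HasSum (fun k => ∫ x in Ioi 0, F k x) (∫ x in Ioi 0, ∑' k, F k x) :=
    hasSum_integral_of_summable_integral_norm
      (fun k => (exp_neg_integrableOn_Ioi 0 (hμ k)).const_mul (ξ ^ (k + 1))) hsummable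
  simp only [hF] at hsum
  refine (setIntegral_congr_fun measurableSet_Ioi fun x hx => ?_).trans hsum.tsum_eq.symm
  rw [← ((hasSum_cloneKernel hlam.le hξ (le_of_lt hx)).mul_left (exp (-δ * x))).tsum_eq]
  refine tsum_congr fun k => ?_
  rw [mul_left_comm, ← exp_add]
  simp only [F, μ]
  ring_nf

end cloneKernel

theorem integral_mul_one_sub_div_eq {n : ℝ → ℝ} {lam ξ t : ℝ}
    (hn : IntervalIntegrable n volume 0 t) (ht : 0 ≤ t) (hlam : 0 ≤ lam) (hξ : |ξ| < 1) :
    ∫ τ in 0..t, n τ * (1 - lam / (1 - ξ * exp (-lam * (t - τ)))) =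
      (1 - lam) * (∫ τ in 0..t, n τ) -
        lam * ∫ x in 0..t, n (t - x) * cloneKernel lam ξ x := by
  have hmaps : MapsTo (fun τ => t - τ) (uIcc 0 t) (Ici 0) := fun τ hτ => by
    rw [uIcc_of_le ht] at hτ
    exact sub_nonneg.2 hτ.2
  have hkernel : IntervalIntegrable (fun τ => n τ * cloneKernel lam ξ (t - τ)) volume 0 t :=
    hn.mul_continuousOn ((continuousOn_cloneKernel hlam hξ).comp (by fun_prop) hmaps)
  have hreflect : ∫ x in 0..t, n (t - x) * cloneKernel lam ξ x =
      ∫ τ in 0..t, n τ * cloneKernel lam ξ (t - τ) := by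
    simpa using
      integral_comp_sub_left (fun τ => n τ * cloneKernel lam ξ (t - τ)) t (a := 0) (b := t)
  rw [hreflect, ← intervalIntegral.integral_const_mul, ← intervalIntegral.integral_const_mul,
    ← integral_sub (hn.const_mul _) (hkernel.const_mul _)]
  refine integral_congr fun τ hτ => ?_
  rw [one_sub_div_eq_sub_cloneKernel hlam hξ (hmaps hτ)]
  ring

theorem limit_clone_generating_function_exponential_type_general
    (β : ℝ) (hβ : β ∈ Set.Ico (0 : ℝ) 1) (lam : ℝ) (hlam : lam = 1 - β)
    (n : ℝ → ℝ) (hn : Assumption1 n) (δ : ℝ)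
    (hδlim : Filter.Tendsto (fun t : ℝ => Real.log (n t) / t) Filter.atTop (nhds δ))
    (hδpos : 0 < δ)
    (ξ γ : ℝ) (hξ : |ξ| < 1)
    (hγ : γ = δ / lam) :
    Filter.Tendsto
      (fun t : ℝ =>
        (1 / ∫ τ in (0:ℝ)..t, n τ) *
          (∫ τ in (0:ℝ)..t, n τ * (1 - lam / (1 - ξ * Real.exp (-lam * (t - τ))))) - β)
      Filter.atTop
      (nhds (-δ * ∑' k : ℕ, ξ ^ (k + 1) / (γ + (k + 1)))) := by
  have hlam0 : 0 < lam := by linarith [hβ.2]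
  obtain rfl : β = 1 - lam := by linarith
  have hmass := hn.tendsto_integral_div hδlim hδpos
  have hkernel := hn.tendsto_integral_mul_div hδlim hδpos measurable_cloneKernel
    fun x hx => abs_cloneKernel_le hlam0.le hξ hx.le
  rw [integral_exp_neg_mul_cloneKernel hδpos hlam0 hξ] at hkernel
  have hvalue : -lam * ((∑' k : ℕ, ξ ^ (k + 1) / (δ + lam * (k + 1))) / δ⁻¹) =
      -δ * ∑' k : ℕ, ξ ^ (k + 1) / (γ + (k + 1)) := by
    rw [div_inv_eq_mul, hγ, ← tsum_mul_right, ← tsum_mul_left, ← tsum_mul_left]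
    refine tsum_congr fun k => ?_
    field_simp
  rw [← hvalue]
  refine ((hkernel.div hmass (inv_ne_zero hδpos.ne')).const_mul (-lam)).congr' ?_
  filter_upwards [eventually_gt_atTop 0] with t ht
  have hint := hn.monotone.intervalIntegrable (μ := volume) (a := 0) (b := t)
  have hmass_ne : (∫ τ in 0..t, n τ) ≠ 0 :=
    (intervalIntegral_pos_of_pos_on hint (fun x hx => hn.pos hx.1) ht).ne'
  rw [integral_mul_one_sub_div_eq hint ht.le hlam0.le hξ]
  have hnt := (hn.pos ht).ne'
  simp only [Pi.div_apply]
  field_simp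
  ring

/-- For exponential-type wild-type growth (`δ* > 0`), the clone size generating function
itself converges: `lim_{t→∞}(𝒴_t(s) − β) = −δ* Σ_{k≥1} ξ^k/(γ*+k)`, where
`𝒴_t(s) = (1/a_t)∫_0^t n_τ Z_{t−τ}(s) dτ`, `Z_u(s) = 1 − λ/(1 − ξ e^{−λu})`,
`ξ = (β−s)/(1−s)`, `λ = 1−β`, `γ* = δ*/λ`. -/
theorem limit_clone_generating_function_exponential_type
    (β : ℝ) (hβ : β ∈ Set.Ico (0 : ℝ) 1) (lam : ℝ) (hlam : lam = 1 - β)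
    (n : ℝ → ℝ) (hn : Assumption1 n) (δ : ℝ)
    (hδlim : Filter.Tendsto (fun t : ℝ => Real.log (n t) / t) Filter.atTop (nhds δ))
    (hδpos : 0 < δ)
    (s ξ γ : ℝ) (hs : |s| < 1) (hξdef : ξ = (β - s) / (1 - s)) (hξ : |ξ| < 1)
    (hγ : γ = δ / lam) :
    Filter.Tendsto
      (fun t : ℝ =>
        (1 / ∫ τ in (0:ℝ)..t, n τ) *
          (∫ τ in (0:ℝ)..t, n τ * (1 - lam / (1 - ξ * Real.exp (-lam * (t - τ))))) - β)
      Filter.atTop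
      (nhds (-δ * ∑' k : ℕ, ξ ^ (k + 1) / (γ + (k + 1)))) :=
  limit_clone_generating_function_exponential_type_general β hβ lam hlam n hn δ hδlim hδpos ξ γ hξ
    hγ
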